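/- Let a₁⁺, a₂⁺, a₁⁻, a₂⁻ ≥ 0, σ² ≥ 0, μ ∈ ℝ, and let G⁺, G⁻ be (nonnegative Borel) measures on (0,∞) satisfying ∫ (1+t)^{−1} dG^±(t) < ∞, and define ψ(ξ) = (a₂⁺ ξ² − i a₁⁺ ξ) · ST(G⁺)(−iξ) + (a₂⁻ ξ² + i a₁⁻ ξ) · ST(G⁻)(iξ) + (σ²/2) ξ² − iμξ for ξ ∈ ℂ ∖ iℝ. Then for every q > 0 and every ξ ∈ ℂ with Re ξ ≠ 0, one has q + ψ(ξ) ≠ 0; i.e., for a Stieltjes–Lévy process the equation q + ψ(ξ) = 0 has no solution on ℂ ∖ iℝ. -/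

import Mathlib

open MeasureTheory Complex Set
open scoped ENNReal

/-- The Stieltjes transform `ST(G)(z) = ∫ (t + z)⁻¹ dG(t)` of a measure `G` on `(0,∞)`
(realized as a Borel measure on `ℝ`). -/
noncomputable def stieltjesTransform (G : Measure ℝ) (z : ℂ) : ℂ :=
  ∫ t : ℝ, ((t : ℂ) + z)⁻¹ ∂G

/-- The characteristic exponent of a Stieltjes–Lévy process:
`ψ(ξ) = (a₂⁺ξ² - ia₁⁺ξ)·ST(G⁺)(-iξ) + (a₂⁻ξ² + ia₁⁻ξ)·ST(G⁻)(iξ) + (σ²/2)ξ² - iμξ`. -/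
noncomputable def slPsi (a1p a2p a1m a2m sig2 μ : ℝ) (Gp Gm : Measure ℝ) (ξ : ℂ) : ℂ :=
  ((a2p : ℂ) * ξ ^ 2 - Complex.I * (a1p : ℂ) * ξ) * stieltjesTransform Gp (-Complex.I * ξ) +
    ((a2m : ℂ) * ξ ^ 2 + Complex.I * (a1m : ℂ) * ξ) * stieltjesTransform Gm (Complex.I * ξ) +
    ((sig2 / 2 : ℝ) : ℂ) * ξ ^ 2 - Complex.I * (μ : ℂ) * ξ
/-!
Multiply `q + ψ(ξ)` by `conj ξ`, take the real part and multiply by `Re ξ`. The constant `q`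
contributes `q (Re ξ)²`, the Gaussian part `(σ²/2) |ξ|² (Re ξ)²`, the drift nothing, and each
Stieltjes part the `G`-integral of `(Re ξ)² |ξ|² (a₂ t + a₁) / |t ∓ iξ|²`, which is nonnegative since
`G` lives on `(0, ∞)`. Hence `q + ψ(ξ) = 0` would force `q (Re ξ)² ≤ 0`.
-/

open ComplexConjugate

lemma ae_nonneg_of_measure_Iic_eq_zero {G : Measure ℝ} (hG : G (Iic 0) = 0) :
    ∀ᵐ t ∂G, 0 ≤ t := by
  rw [ae_iff]
  simp only [not_le]
  exact measure_mono_null Iio_subset_Iic_self hG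

lemma re_mul_re_mul_conj_mul_inv_eq (a1 a2 t : ℝ) (ξ : ℂ) :
    ξ.re * ((a2 * ξ ^ 2 - I * a1 * ξ) * conj ξ * ((t : ℂ) + -I * ξ)⁻¹).re
      = ξ.re ^ 2 * normSq ξ * (a2 * t + a1) / normSq ((t : ℂ) + -I * ξ) := by
  rw [← div_eq_mul_inv, div_re]
  simp only [mul_re, mul_im, sub_re, sub_im, add_re, add_im, neg_re, neg_im, I_re, I_im,
    ofReal_re, ofReal_im, conj_re, conj_im, pow_two, normSq_apply]
  ring

theorem re_mul_re_stieltjesTerm_mul_conj_nonneg {G : Measure ℝ} (hG : ∀ᵐ t ∂G, 0 ≤ t)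
    {a1 a2 : ℝ} (ha1 : 0 ≤ a1) (ha2 : 0 ≤ a2) (ξ : ℂ) :
    0 ≤ ξ.re * ((a2 * ξ ^ 2 - I * a1 * ξ) * stieltjesTransform G (-I * ξ) * conj ξ).re := by
  set c := (a2 * ξ ^ 2 - I * a1 * ξ) * conj ξ
  have hST : (a2 * ξ ^ 2 - I * a1 * ξ) * stieltjesTransform G (-I * ξ) * conj ξ
      = ∫ t : ℝ, c * ((t : ℂ) + -I * ξ)⁻¹ ∂G := by
    rw [integral_const_mul, stieltjesTransform]; ring
  rw [hST]
  by_cases hint : Integrable (fun t : ℝ => c * ((t : ℂ) + -I * ξ)⁻¹) G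
  · have hre : (∫ t : ℝ, c * ((t : ℂ) + -I * ξ)⁻¹ ∂G).re
        = ∫ t : ℝ, (c * ((t : ℂ) + -I * ξ)⁻¹).re ∂G := (integral_re hint).symm
    rw [hre, ← integral_const_mul]
    refine integral_nonneg_of_ae (hG.mono fun t ht => ?_)
    simp only [c, re_mul_re_mul_conj_mul_inv_eq]
    exact div_nonneg (mul_nonneg (mul_nonneg (sq_nonneg _) (normSq_nonneg _)) (by positivity))
      (normSq_nonneg _)
  · -- the Stieltjes transform then takes the junk value `0`
    rw [integral_undef hint, zero_re, mul_zero]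

theorem slPsi_no_zero_off_imaginary_axis_general
    (a1p a2p a1m a2m sig2 μ : ℝ)
    (ha1p : 0 ≤ a1p) (ha2p : 0 ≤ a2p) (ha1m : 0 ≤ a1m) (ha2m : 0 ≤ a2m)
    (hsig2 : 0 ≤ sig2)
    (Gp Gm : Measure ℝ)
    (hGpSupp : Gp (Set.Iic 0) = 0) (hGmSupp : Gm (Set.Iic 0) = 0) :
    ∀ q : ℝ, 0 < q → ∀ ξ : ℂ, ξ.re ≠ 0 →
      (q : ℂ) + slPsi a1p a2p a1m a2m sig2 μ Gp Gm ξ ≠ 0 := by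
  intro q hq ξ hξ hzero
  set P := (a2p * ξ ^ 2 - I * a1p * ξ) * stieltjesTransform Gp (-I * ξ) * conj ξ
  set M := (a2m * ξ ^ 2 + I * a1m * ξ) * stieltjesTransform Gm (I * ξ) * conj ξ
  have hP : 0 ≤ ξ.re * P.re :=
    re_mul_re_stieltjesTerm_mul_conj_nonneg (ae_nonneg_of_measure_Iic_eq_zero hGpSupp) ha1p ha2p ξ
  -- the `G⁻` term of `ψ(ξ)` is the `G⁺`-shaped term at `-ξ`,
  -- and `ξ.re * (z * conj ξ).re` is even in `ξ`
  have hM : 0 ≤ ξ.re * M.re := by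
    simpa only [neg_re, map_neg, neg_sq, mul_neg, neg_mul, neg_neg, sub_neg_eq_add]
      using re_mul_re_stieltjesTerm_mul_conj_nonneg
        (ae_nonneg_of_measure_Iic_eq_zero hGmSupp) ha1m ha2m (-ξ)
  have hsplit : ((q : ℂ) + slPsi a1p a2p a1m a2m sig2 μ Gp Gm ξ) * conj ξ
      = ((q : ℂ) * conj ξ + ((sig2 / 2 : ℝ) : ℂ) * ξ ^ 2 * conj ξ - I * μ * ξ * conj ξ) + P + M := by
    rw [slPsi]; ring
  have hrest : ((q : ℂ) * conj ξ + ((sig2 / 2 : ℝ) : ℂ) * ξ ^ 2 * conj ξ - I * μ * ξ * conj ξ).re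
      = ξ.re * (q + sig2 / 2 * normSq ξ) := by
    simp only [mul_re, mul_im, sub_re, add_re, I_re, I_im, ofReal_re, ofReal_im, conj_re, conj_im,
      pow_two, normSq_apply]
    ring
  have hre := congrArg (fun z => ξ.re * z.re) hsplit
  simp only [hzero, zero_mul, zero_re, mul_zero, add_re, hrest] at hre
  have : 0 < ξ.re ^ 2 * (q + sig2 / 2 * normSq ξ) := by
    have := normSq_nonneg ξ
    positivity
  nlinarith

theorem slPsi_no_zero_off_imaginary_axis
    (a1p a2p a1m a2m sig2 μ : ℝ)
    (ha1p : 0 ≤ a1p) (ha2p : 0 ≤ a2p) (ha1m : 0 ≤ a1m) (ha2m : 0 ≤ a2m)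
    (hsig2 : 0 ≤ sig2)
    (Gp Gm : Measure ℝ)
    (hGpSupp : Gp (Set.Iic 0) = 0) (hGmSupp : Gm (Set.Iic 0) = 0)
    (hGpInt : (∫⁻ t : ℝ, ENNReal.ofReal ((1 + t)⁻¹) ∂Gp) < ⊤)
    (hGmInt : (∫⁻ t : ℝ, ENNReal.ofReal ((1 + t)⁻¹) ∂Gm) < ⊤) :
    ∀ q : ℝ, 0 < q → ∀ ξ : ℂ, ξ.re ≠ 0 →
      (q : ℂ) + slPsi a1p a2p a1m a2m sig2 μ Gp Gm ξ ≠ 0 :=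
  slPsi_no_zero_off_imaginary_axis_general a1p a2p a1m a2m sig2 μ ha1p ha2p ha1m ha2m hsig2 Gp Gm
    hGpSupp hGmSupp
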